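/- On ℝ⁶ with coordinates (v₁,…,v₆) define the vector fields X₁ᴿ = ∂/∂v₁ + v₅ ∂/∂v₄ − (1/2)v₅² ∂/∂v₆, X₂ᴿ = v₁ ∂/∂v₁ + ∂/∂v₂ + (1/2)v₄ ∂/∂v₄ − (1/2)v₅ ∂/∂v₅, X₃ᴿ = v₁² ∂/∂v₁ + 2v₁ ∂/∂v₂ + e^{v₂} ∂/∂v₃ − v₄ ∂/∂v₅ + (1/2)v₄² ∂/∂v₆, X₄ᴿ = ∂/∂v₄, X₅ᴿ = ∂/∂v₅ − v₄ ∂/∂v₆, X₆ᴿ = ∂/∂v₆. Then for each α ∈ {1,…,6} the vector field v ↦ e^{−v₂}·Xαᴿ(v) is divergence-free on ℝ⁶, i.e. the trace of its Fréchet derivative vanishes at every point. (This is the coordinate expression of the invariance ℒ_{Xαᴿ}Θ^{do} = 0 of the multisymplectic volume form Θ^{do} = e^{−v₂} dv₁∧…∧dv₆.) -/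

import Mathlib

/-! Since div (f • X) = X f + f · div X and X(e^{-v₂}) = -e^{-v₂} X², the field e^{-v₂} • X
is divergence-free exactly when div X equals the ∂/∂v₂-coefficient X² of X. For the six
fields this is a direct computation of partial derivatives. -/

/-- The divergence of a vector field on ℝⁿ at a point: the trace of its
Fréchet derivative there. -/
noncomputable def vdiv {n : ℕ} (V : (Fin n → ℝ) → (Fin n → ℝ))
    (p : Fin n → ℝ) : ℝ :=
  LinearMap.trace ℝ (Fin n → ℝ) (fderiv ℝ V p).toLinearMap

/-- The right-invariant vector fields X₁ᴿ,…,X₆ᴿ of the dissipative quantum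
harmonic oscillator system on ℝ⁶, in coordinates (v₁,…,v₆) = (p 0,…,p 5). -/
noncomputable def doXR : Fin 6 → (Fin 6 → ℝ) → (Fin 6 → ℝ) :=
  ![fun p => ![1, 0, 0, p 4, 0, -(p 4) ^ 2 / 2],
    fun p => ![p 0, 1, 0, p 3 / 2, -(p 4) / 2, 0],
    fun p => ![(p 0) ^ 2, 2 * p 0, Real.exp (p 1), 0, -(p 3), (p 3) ^ 2 / 2],
    fun _ => ![0, 0, 0, 1, 0, 0],
    fun p => ![0, 0, 0, 0, 1, -(p 3)],
    fun _ => ![0, 0, 0, 0, 0, 1]]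

section

variable {n : ℕ} {V : (Fin n → ℝ) → (Fin n → ℝ)} {p : Fin n → ℝ}

lemma vdiv_smul {f : (Fin n → ℝ) → ℝ} (hf : DifferentiableAt ℝ f p)
    (hV : DifferentiableAt ℝ V p) :
    vdiv (fun q => f q • V q) p = fderiv ℝ f p (V p) + f p * vdiv V p := by
  simp [vdiv, fderiv_fun_smul hf hV, add_comm]

lemma vdiv_eq_sum_deriv_update (hV : DifferentiableAt ℝ V p) :
    vdiv V p = ∑ i, deriv (fun t => V (Function.update p i t) i) (p i) := by
  rw [vdiv, LinearMap.trace_eq_matrix_trace ℝ (Pi.basisFun ℝ (Fin n))]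
  refine Finset.sum_congr rfl fun i _ => ?_
  have h : HasDerivAt (fun t => V (Function.update p i t))
      (fderiv ℝ V p (Pi.single i 1)) (p i) := by
    have hV' : DifferentiableAt ℝ V (Function.update p i (p i)) := by
      rwa [Function.update_eq_self]
    have := hV'.hasFDerivAt.comp_hasDerivAt (p i) (hasDerivAt_update p i (p i))
    rwa [Function.update_eq_self] at this
  simp [((hasDerivAt_pi.1 h) i).deriv]

lemma vdiv_exp_neg_smul (i : Fin n) (hV : DifferentiableAt ℝ V p) :
    vdiv (fun q => Real.exp (-q i) • V q) p = Real.exp (-p i) * (vdiv V p - V p i) := by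
  have hexp : HasFDerivAt (fun q : Fin n → ℝ => Real.exp (-q i))
      (Real.exp (-p i) • -ContinuousLinearMap.proj i) p :=
    (ContinuousLinearMap.proj (R := ℝ) (φ := fun _ : Fin n => ℝ) i).hasFDerivAt.neg.exp
  rw [vdiv_smul hexp.differentiableAt hV, hexp.fderiv]
  simp only [smul_apply, neg_apply, ContinuousLinearMap.proj_apply, smul_eq_mul]
  ring

end

lemma differentiable_doXR (α : Fin 6) : Differentiable ℝ (doXR α) := by
  rw [differentiable_pi]
  intro i
  fin_cases α <;> fin_cases i <;> simp [doXR] <;> fun_prop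

lemma vdiv_doXR (α : Fin 6) (p : Fin 6 → ℝ) : vdiv (doXR α) p = doXR α p 1 := by
  rw [vdiv_eq_sum_deriv_update (differentiable_doXR α p), Fin.sum_univ_six]
  fin_cases α <;> simp [doXR, neg_div]

/-- For each α, the vector field v ↦ e^{−v₂}·Xαᴿ(v) is divergence-free on ℝ⁶:
the coordinate expression of the invariance ℒ_{Xαᴿ}Θ^{do} = 0 of the
multisymplectic volume form Θ^{do} = e^{−v₂} dv₁ ∧ … ∧ dv₆. -/
theorem dissipative_oscillator_volume_invariance :
    ∀ (α : Fin 6) (p : Fin 6 → ℝ),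
      vdiv (fun q => Real.exp (-(q 1)) • doXR α q) p = 0 := by
  intro α p
  rw [vdiv_exp_neg_smul 1 (differentiable_doXR α p), vdiv_doXR, sub_self, mul_zero]
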